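/- Let φ₁ : [-d₁, d₁] → ℝ and φ₂ : [-d₂, d₂] → ℝ be positive 1-Lipschitz functions with d₁ ≤ d₂, and let K₁ ⊇ K₂ be closed sets in ℝⁿ. Define G_j = C(φ_j, [-d_j, d_j]) ∪ K_j for j = 1,2. If |φ₂ - φ₁| ≤ M on [-d₁, d₁], φ₂ ≤ sup φ₁ + M, and d₂ - d₁ ≤ M, then every point of G₂ is within distance 2M of G₁ in the sense that d̄_{G₁}(x) ≤ 4M for all x ∈ G₂. -/

import Mathlib

/-!
A point `x` of `C(φ₂, [-d₂, d₂])` is moved in two steps into `C(φ₁, [-d₁, d₁])`: first along the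
axis, clamping `x₁` to `s ∈ [-d₁, d₁]`, which costs at most `d₂ - d₁ ≤ M`; then radially towards the
axis, which costs at most `φ₂(x₁) - φ₁(s) ≤ |φ₂(x₁) - φ₂(s)| + |φ₂(s) - φ₁(s)| ≤ 2M` by the
Lipschitz bound on `φ₂`. Hence every point of `G₂` lies within distance `3M` of `G₁`
(points of `K₂ ⊆ K₁` trivially), and the signed distance never exceeds the distance.
-/

open Set Metric Classical

/-- Signed distance function to a set. -/
noncomputable def sdist {n : ℕ} (E : Set (EuclideanSpace ℝ (Fin n)))
    (x : EuclideanSpace ℝ (Fin n)) : ℝ :=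
  if x ∈ E then -Metric.infDist x Eᶜ else Metric.infDist x E

lemma sdist_le_infDist {n : ℕ} (E : Set (EuclideanSpace ℝ (Fin n)))
    (x : EuclideanSpace ℝ (Fin n)) : sdist E x ≤ infDist x E := by
  unfold sdist
  split_ifs with hx
  · rw [infDist_zero_of_mem hx, neg_nonpos]
    exact infDist_nonneg
  · exact le_rfl

lemma abs_sub_projIcc_le {a b δ t : ℝ} (hab : a ≤ b) (hδ : 0 ≤ δ) (ht : t ∈ Icc (a - δ) (b + δ)) :
    |t - projIcc a b hab t| ≤ δ := by
  rcases le_total t a with hta | hat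
  · rw [projIcc_of_le_left hab hta, abs_le]
    constructor <;> linarith [ht.1]
  rcases le_total b t with hbt | htb
  · rw [projIcc_of_right_le hab hbt, abs_le]
    constructor <;> linarith [ht.2]
  · rw [projIcc_of_mem hab ⟨hat, htb⟩, sub_self, abs_zero]
    exact hδ

lemma exists_norm_smul_le_and_norm_sub_smul_le {E : Type*} [NormedAddCommGroup E] [NormedSpace ℝ E]
    (v : E) {ρ σ : ℝ} (hρ : 0 ≤ ρ) (hσ : 0 ≤ σ) (hv : ‖v‖ ≤ ρ + σ) :
    ∃ c : ℝ, ‖c • v‖ ≤ ρ ∧ ‖v - c • v‖ ≤ σ := by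
  rcases le_or_gt ‖v‖ ρ with hvρ | hρv
  · exact ⟨1, by rwa [one_smul], by rwa [one_smul, sub_self, norm_zero]⟩
  have hvpos : 0 < ‖v‖ := hρ.trans_lt hρv
  have hc : ρ / ‖v‖ ≤ 1 := (div_le_one hvpos).2 hρv.le
  refine ⟨ρ / ‖v‖, ?_, ?_⟩
  · rw [norm_smul, Real.norm_of_nonneg (by positivity), div_mul_cancel₀ _ hvpos.ne']
  · calc ‖v - (ρ / ‖v‖) • v‖ = ‖(1 - ρ / ‖v‖) • v‖ := by rw [sub_smul, one_smul]
      _ = ‖v‖ - ρ := by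
        rw [norm_smul, Real.norm_of_nonneg (sub_nonneg.2 hc), sub_mul, one_mul,
          div_mul_cancel₀ _ hvpos.ne']
      _ ≤ σ := by linarith

section SolidOfRevolution

variable {n : ℕ} [NeZero n]

/-- The paper's `C(φ, [a, b])`. -/
def solidOfRevolution (φ : ℝ → ℝ) (a b : ℝ) : Set (EuclideanSpace ℝ (Fin n)) :=
  {z | z 0 ∈ Icc a b ∧ ‖z - z 0 • EuclideanSpace.single (0 : Fin n) (1 : ℝ)‖ ≤ φ (z 0)}

lemma exists_mem_solidOfRevolution_dist_le {φ : ℝ → ℝ} {a b s σ : ℝ}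
    (hs : s ∈ Icc a b) (hφ : 0 ≤ φ s) (hσ : 0 ≤ σ) (x : EuclideanSpace ℝ (Fin n))
    (hx : ‖x - x 0 • EuclideanSpace.single (0 : Fin n) (1 : ℝ)‖ ≤ φ s + σ) :
    ∃ y ∈ solidOfRevolution φ a b, dist x y ≤ |x 0 - s| + σ := by
  set e₀ := EuclideanSpace.single (0 : Fin n) (1 : ℝ)
  set v := x - x 0 • e₀
  obtain ⟨c, hcv, hvc⟩ := exists_norm_smul_le_and_norm_sub_smul_le v hφ hσ hx
  have hv0 : v 0 = 0 := by simp [v, e₀]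
  have hy0 : (s • e₀ + c • v) 0 = s := by simp [e₀, hv0]
  refine ⟨s • e₀ + c • v, ⟨by rwa [hy0], ?_⟩, ?_⟩
  · rwa [hy0, add_sub_cancel_left]
  calc dist x (s • e₀ + c • v) = ‖(x 0 - s) • e₀ + (v - c • v)‖ := by
        rw [dist_eq_norm]; congr 1; simp only [v]; module
    _ ≤ |x 0 - s| + σ := by
        refine (norm_add_le _ _).trans (add_le_add ?_ hvc)
        simp [e₀, norm_smul]

end SolidOfRevolution

theorem consecutive_barriers_close_general
    (n : ℕ) [NeZero n] (d₁ d₂ M : ℝ)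
    (hd1 : 0 < d₁) (hdd : d₁ ≤ d₂) (hM : 0 ≤ M)
    (φ₁ φ₂ : ℝ → ℝ)
    (h2L : LipschitzOnWith 1 φ₂ (Set.Icc (-d₂) d₂))
    (h1p : ∀ t ∈ Set.Icc (-d₁) d₁, 0 < φ₁ t)
    (K₁ K₂ : Set (EuclideanSpace ℝ (Fin n)))
    (hKsub : K₂ ⊆ K₁)
    (hdiff : ∀ t ∈ Set.Icc (-d₁) d₁, |φ₂ t - φ₁ t| ≤ M)
    (hd : d₂ - d₁ ≤ M) :
    ∀ x ∈ ({z : EuclideanSpace ℝ (Fin n) | z 0 ∈ Set.Icc (-d₂) d₂ ∧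
        ‖z - z 0 • EuclideanSpace.single (0 : Fin n) (1:ℝ)‖ ≤ φ₂ (z 0)} ∪ K₂),
      sdist ({z : EuclideanSpace ℝ (Fin n) | z 0 ∈ Set.Icc (-d₁) d₁ ∧
        ‖z - z 0 • EuclideanSpace.single (0 : Fin n) (1:ℝ)‖ ≤ φ₁ (z 0)} ∪ K₁) x
        ≤ 4 * M := by
  intro x hx
  refine (sdist_le_infDist _ x).trans ?_
  rcases hx with ⟨ht, hr⟩ | hx
  · set s : ℝ := ↑(projIcc (-d₁) d₁ (by linarith) (x 0))
    have hs : s ∈ Icc (-d₁) d₁ := Subtype.prop _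
    have hxs : |x 0 - s| ≤ M :=
      abs_sub_projIcc_le _ hM ⟨by linarith [ht.1], by linarith [ht.2]⟩
    have hφ : φ₂ (x 0) ≤ φ₁ s + 2 * M := by
      have hlip := h2L.dist_le_mul (x 0) ht s (Icc_subset_Icc (by linarith) hdd hs)
      rw [NNReal.coe_one, one_mul, Real.dist_eq, Real.dist_eq] at hlip
      linarith [(abs_le.1 hlip).2, (abs_le.1 (hdiff s hs)).2]
    obtain ⟨y, hy, hxy⟩ :=
      exists_mem_solidOfRevolution_dist_le hs (h1p s hs).le (by positivity) x (hr.trans hφ)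
    calc _ ≤ dist x y := infDist_le_dist_of_mem (Or.inl hy)
      _ ≤ 4 * M := by linarith
  · rw [infDist_zero_of_mem (mem_union_right _ (hKsub hx))]
    positivity

/-- For positive 1-Lipschitz φ₁ on [-d₁,d₁], φ₂ on [-d₂,d₂] with d₁ ≤ d₂,
closed sets K₁ ⊇ K₂, G_j = C(φ_j,[-d_j,d_j]) ∪ K_j, if |φ₂ - φ₁| ≤ M on [-d₁,d₁],
φ₂ ≤ sup φ₁ + M and d₂ - d₁ ≤ M, then every point of G₂ satisfies d̄_{G₁} ≤ 4M. -/
theorem consecutive_barriers_close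
    (n : ℕ) [NeZero n] (hn : 2 ≤ n) (d₁ d₂ M : ℝ)
    (hd1 : 0 < d₁) (hdd : d₁ ≤ d₂) (hM : 0 ≤ M)
    (φ₁ φ₂ : ℝ → ℝ)
    (h1L : LipschitzOnWith 1 φ₁ (Set.Icc (-d₁) d₁))
    (h2L : LipschitzOnWith 1 φ₂ (Set.Icc (-d₂) d₂))
    (h1p : ∀ t ∈ Set.Icc (-d₁) d₁, 0 < φ₁ t)
    (h2p : ∀ t ∈ Set.Icc (-d₂) d₂, 0 < φ₂ t)
    (K₁ K₂ : Set (EuclideanSpace ℝ (Fin n)))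
    (hK1 : IsClosed K₁) (hK2 : IsClosed K₂) (hKsub : K₂ ⊆ K₁)
    (hdiff : ∀ t ∈ Set.Icc (-d₁) d₁, |φ₂ t - φ₁ t| ≤ M)
    (hsup : ∀ t ∈ Set.Icc (-d₂) d₂, φ₂ t ≤ sSup (φ₁ '' Set.Icc (-d₁) d₁) + M)
    (hd : d₂ - d₁ ≤ M) :
    ∀ x ∈ ({z : EuclideanSpace ℝ (Fin n) | z 0 ∈ Set.Icc (-d₂) d₂ ∧
        ‖z - z 0 • EuclideanSpace.single (0 : Fin n) (1:ℝ)‖ ≤ φ₂ (z 0)} ∪ K₂),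
      sdist ({z : EuclideanSpace ℝ (Fin n) | z 0 ∈ Set.Icc (-d₁) d₁ ∧
        ‖z - z 0 • EuclideanSpace.single (0 : Fin n) (1:ℝ)‖ ≤ φ₁ (z 0)} ∪ K₁) x
        ≤ 4 * M :=
  consecutive_barriers_close_general n d₁ d₂ M hd1 hdd hM φ₁ φ₂ h2L h1p K₁ K₂ hKsub hdiff hd
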